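/- arXiv:math/9704202 — 3 statements merged into one kernel-verified Lean document; each statement's English description precedes it below -/
import Mathlib

section
/- A uniformly discrete space X of bounded geometry is non-amenable if and only if H₀^{uf}(X; ℤ) = 0. -/
/-- The closed `r`-neighborhood of a set `A`. -/
def nbhd {Z : Type*} [MetricSpace Z] (r : ℝ) (A : Set Z) : Set Z :=
  {z | ∃ a ∈ A, dist z a ≤ r}

/-- The `r`-boundary of `A`: points outside `A` within distance `r` of `A`. -/
def bdry {Z : Type*} [MetricSpace Z] (r : ℝ) (A : Set Z) : Set Z :=
  nbhd r A \ A

/-- Uniformly discrete metric space. -/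
def UniformlyDiscrete (Z : Type*) [MetricSpace Z] : Prop :=
  ∃ r > (0 : ℝ), ∀ x y : Z, dist x y < r → x = y

/-- Bounded geometry: balls of radius `r` have at most `N_r` points. -/
def BoundedGeometry (Z : Type*) [MetricSpace Z] : Prop :=
  ∀ r : ℝ, ∃ N : ℕ, ∀ x : Z, {y : Z | dist y x ≤ r}.Finite ∧
    {y : Z | dist y x ≤ r}.ncard ≤ N

/-- A uniformly finite 1-chain with coefficients in a normed ring `R`:
coefficients on ordered pairs (edges), uniformly bounded, supported on edges of
uniformly bounded length, and locally finite at each vertex. -/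
def IsUFOneChain {Z : Type*} [MetricSpace Z] {R : Type*} [NormedRing R]
    (b : Z → Z → R) : Prop :=
  (∃ M : ℝ, ∀ z w : Z, ‖b z w‖ ≤ M) ∧
  (∃ l : ℝ, ∀ z w : Z, b z w ≠ 0 → dist z w ≤ l) ∧
  (∀ z : Z, {w : Z | b z w ≠ 0 ∨ b w z ≠ 0}.Finite)

/-- The boundary of a 1-chain at a vertex `z`: net flow into `z`. -/
noncomputable def ufBoundaryAt {Z : Type*} [MetricSpace Z] {R : Type*} [NormedRing R]
    (b : Z → Z → R) (z : Z) : R :=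
  (∑ᶠ w : Z, b w z) - ∑ᶠ w : Z, b z w

/-- A 0-chain `c` represents `0` in `H₀^{uf}(Z; R)` iff it is the boundary of a
uniformly finite 1-chain. -/
def UFBoundsZero {Z : Type*} [MetricSpace Z] {R : Type*} [NormedRing R]
    (c : Z → R) : Prop :=
  ∃ b : Z → Z → R, IsUFOneChain b ∧ ∀ z : Z, c z = ufBoundaryAt b z

/-- Amenability: existence of a regular (Følner) sequence of finite nonempty sets
whose relative `r`-boundaries tend to `0` for every `r > 0`. -/
def Amenable (Z : Type*) [MetricSpace Z] : Prop :=
  ∃ S : ℕ → Set Z, (∀ i, (S i).Finite ∧ (S i).Nonempty) ∧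
    ∀ r > (0 : ℝ), Filter.Tendsto
      (fun i => ((bdry r (S i)).ncard : ℝ) / ((S i).ncard : ℝ))
      Filter.atTop (nhds 0)

section BasicNbhd
variable {X : Type*} [MetricSpace X]

lemma subset_nbhd {r : ℝ} (hr : 0 ≤ r) (A : Set X) : A ⊆ nbhd r A :=
  fun a ha => ⟨a, ha, by simpa using hr⟩

lemma nbhd_mono {r r' : ℝ} (h : r ≤ r') (A : Set X) : nbhd r A ⊆ nbhd r' A :=
  fun z hz => by obtain ⟨a, ha, hd⟩ := hz; exact ⟨a, ha, hd.trans h⟩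

lemma bdry_mono {r r' : ℝ} (h : r ≤ r') (A : Set X) : bdry r A ⊆ bdry r' A :=
  fun z hz => ⟨nbhd_mono h A hz.1, hz.2⟩

lemma nbhd_nbhd {r t : ℝ} (A : Set X) : nbhd r (nbhd t A) ⊆ nbhd (r + t) A := by
  rintro z ⟨b, ⟨a, ha, hba⟩, hzb⟩
  exact ⟨a, ha, (dist_triangle z b a).trans (add_le_add hzb hba)⟩

lemma nbhd_finite (hbg : BoundedGeometry X) {r : ℝ} {A : Set X} (hA : A.Finite) :
    (nbhd r A).Finite := by
  obtain ⟨N, hN⟩ := hbg r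
  refine (hA.biUnion (fun a _ => (hN a).1)).subset ?_
  rintro z ⟨a, ha, hd⟩
  exact Set.mem_biUnion ha hd

lemma bdry_finite (hbg : BoundedGeometry X) {r : ℝ} {A : Set X} (hA : A.Finite) :
    (bdry r A).Finite :=
  (nbhd_finite hbg hA).subset Set.diff_subset

end BasicNbhd

inductive FullFlow {X : Type*} (c0 c1 : X → X) (A : Set X) : X → Prop
  | zero_full (p : X) (h : FullFlow c0 c1 A p) : FullFlow c0 c1 A (c0 p)
  | zero_mem (p : X) (h : p ∈ A) : FullFlow c0 c1 A (c0 p)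
  | one (p : X) (h1 : FullFlow c0 c1 A p) (h2 : p ∈ A) : FullFlow c0 c1 A (c1 p)

section FullLemmas
variable {X : Type*} {c0 c1 : X → X} {A : Set X}

lemma fullFlow_c0_iff (h00 : Function.Injective c0) (h01 : ∀ x y : X, c0 x ≠ c1 y) (p : X) :
    FullFlow c0 c1 A (c0 p) ↔ (FullFlow c0 c1 A p ∨ p ∈ A) := by
  constructor
  · intro h
    have key : ∀ z, FullFlow c0 c1 A z → z = c0 p → (FullFlow c0 c1 A p ∨ p ∈ A) := by
      intro z hz
      cases hz with
      | zero_full q hq => intro he; exact Or.inl ((h00 he) ▸ hq)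
      | zero_mem q hq => intro he; exact Or.inr ((h00 he) ▸ hq)
      | one q h1 h2 => intro he; exact absurd he.symm (h01 p q)
    exact key _ h rfl
  · rintro (h | h)
    · exact FullFlow.zero_full p h
    · exact FullFlow.zero_mem p h

lemma fullFlow_c1_iff (h11 : Function.Injective c1) (h01 : ∀ x y : X, c0 x ≠ c1 y) (p : X) :
    FullFlow c0 c1 A (c1 p) ↔ (FullFlow c0 c1 A p ∧ p ∈ A) := by
  constructor
  · intro h
    have key : ∀ z, FullFlow c0 c1 A z → z = c1 p → (FullFlow c0 c1 A p ∧ p ∈ A) := by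
      intro z hz
      cases hz with
      | zero_full q hq => intro he; exact absurd he (h01 q p)
      | zero_mem q hq => intro he; exact absurd he (h01 q p)
      | one q h1 h2 => intro he; exact (h11 he) ▸ ⟨h1, h2⟩
    exact key _ h rfl
  · exact fun h => FullFlow.one p h.1 h.2

lemma not_fullFlow {z : X} (hz : ∀ p, z ≠ c0 p ∧ z ≠ c1 p) : ¬ FullFlow c0 c1 A z := by
  intro h
  cases h with
  | zero_full q hq => exact (hz q).1 rfl
  | zero_mem q hq => exact (hz q).1 rfl
  | one q h1 h2 => exact (hz q).2 rfl

end FullLemmas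

open Classical in
lemma indicator_ufBoundsZero {X : Type*} [MetricSpace X] (hbg : BoundedGeometry X)
    {R : ℝ} (j : X × Bool → X) (hjinj : Function.Injective j)
    (hjd : ∀ p : X × Bool, dist (j p) p.1 ≤ R) (A : Set X) :
    UFBoundsZero (fun z => if z ∈ A then (1 : ℤ) else 0) := by
  classical
  set c0 : X → X := fun x => j (x, false) with hc0
  set c1 : X → X := fun x => j (x, true) with hc1
  have h00 : Function.Injective c0 := by
    intro x y h; have := hjinj h; simpa using this
  have h11 : Function.Injective c1 := by
    intro x y h; have := hjinj h; simpa using this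
  have h01 : ∀ x y : X, c0 x ≠ c1 y := by
    intro x y h; have := hjinj h; simp at this
  have hne : ∀ z, c0 z ≠ c1 z := fun z => h01 z z
  set b : X → X → ℤ := fun z w =>
    (if w = c0 z ∧ (FullFlow c0 c1 A z ∨ z ∈ A) then 1 else 0) +
    (if w = c1 z ∧ (FullFlow c0 c1 A z ∧ z ∈ A) then 1 else 0) with hbdef
  have hsupp : ∀ z w, b z w ≠ 0 → w = c0 z ∨ w = c1 z := by
    intro z w h
    by_contra hc
    push_neg at hc
    simp [hbdef, hc.1, hc.2] at h
  have hdistb : ∀ z w, b z w ≠ 0 → dist w z ≤ R := by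
    intro z w h
    rcases hsupp z w h with h' | h'
    · subst h'; exact hjd (z, false)
    · subst h'; exact hjd (z, true)
  have hout : ∀ z, ∑ᶠ w, b z w =
      (if FullFlow c0 c1 A z then (1:ℤ) else 0) + (if z ∈ A then 1 else 0) := by
    intro z
    have hs : Function.support (fun w => b z w) ⊆ (({c0 z, c1 z} : Finset X) : Set X) := by
      intro w hw
      rcases hsupp z w hw with h | h <;> simp [h]
    rw [finsum_eq_finset_sum_of_support_subset _ hs, Finset.sum_pair (hne z)]
    by_cases hF : FullFlow c0 c1 A z <;> by_cases hA2 : z ∈ A <;>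
      simp [hbdef, hF, hA2, hne z, Ne.symm (hne z)]
  have hin : ∀ z, ∑ᶠ w, b w z = (if FullFlow c0 c1 A z then (1:ℤ) else 0) := by
    intro z
    by_cases h0 : ∃ p, z = c0 p
    · obtain ⟨p, rfl⟩ := h0
      have hside : ∀ w, w ≠ p → b w (c0 p) = 0 := by
        intro w hw
        by_contra hbw
        rcases hsupp w (c0 p) hbw with h' | h'
        · exact hw (h00 h'.symm)
        · exact h01 p w h'
      rw [finsum_eq_single (fun w => b w (c0 p)) p hside]
      have hiff := fullFlow_c0_iff (A := A) h00 h01 p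
      by_cases hq : FullFlow c0 c1 A p ∨ p ∈ A
      · have hF : FullFlow c0 c1 A (c0 p) := hiff.2 hq
        simp [hbdef, hq, hF, h01 p p]
      · have hF : ¬ FullFlow c0 c1 A (c0 p) := fun h => hq (hiff.1 h)
        simp [hbdef, hq, hF, h01 p p]
    · by_cases h1 : ∃ p, z = c1 p
      · obtain ⟨p, rfl⟩ := h1
        have hside : ∀ w, w ≠ p → b w (c1 p) = 0 := by
          intro w hw
          by_contra hbw
          rcases hsupp w (c1 p) hbw with h' | h'
          · exact h01 w p h'.symm
          · exact hw (h11 h'.symm)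
        rw [finsum_eq_single (fun w => b w (c1 p)) p hside]
        have hiff := fullFlow_c1_iff (A := A) h11 h01 p
        by_cases hq : FullFlow c0 c1 A p ∧ p ∈ A
        · have hF : FullFlow c0 c1 A (c1 p) := hiff.2 hq
          simp [hbdef, hq, hF, Ne.symm (h01 p p)]
        · have hF : ¬ FullFlow c0 c1 A (c1 p) := fun h => hq (hiff.1 h)
          simp [hbdef, hq, hF, Ne.symm (h01 p p)]
      · push_neg at h0 h1
        have hF : ¬ FullFlow c0 c1 A z := not_fullFlow (fun p => ⟨h0 p, h1 p⟩)
        rw [finsum_eq_zero_of_forall_eq_zero]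
        · simp [hF]
        · intro w
          by_contra hbw
          rcases hsupp w z hbw with h' | h'
          · exact h0 w h'
          · exact h1 w h'
  refine ⟨fun z w => b w z, ⟨⟨2, ?_⟩, ⟨R, ?_⟩, ?_⟩, ?_⟩
  · intro z w
    have h2 : |b w z| ≤ 2 := by
      simp only [hbdef]
      split_ifs <;> norm_num
    rw [Int.norm_eq_abs]
    exact_mod_cast h2
  · intro z w h
    exact hdistb w z h
  · intro z
    obtain ⟨N, hN⟩ := hbg R
    refine (hN z).1.subset ?_
    intro w hw
    simp only [Set.mem_setOf_eq] at hw ⊢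
    have hw' : b w z ≠ 0 ∨ b z w ≠ 0 := hw
    rcases hw' with h | h
    · rw [dist_comm]; exact hdistb w z h
    · exact hdistb z w h
  · intro z
    show _ = (∑ᶠ w, b z w) - (∑ᶠ w, b w z)
    rw [hout z, hin z]
    ring

section Closure
variable {X : Type*} [MetricSpace X]

lemma ufBoundsZero_congr {c c' : X → ℤ} (h : UFBoundsZero c) (hcc : ∀ z, c' z = c z) :
    UFBoundsZero c' := by
  obtain ⟨b, hb1, hb2⟩ := h
  exact ⟨b, hb1, fun z => (hcc z).trans (hb2 z)⟩

lemma ufBoundsZero_zero : UFBoundsZero (fun _ : X => (0 : ℤ)) := by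
  refine ⟨fun _ _ => 0, ⟨⟨0, by simp⟩, ⟨0, by simp⟩, fun z => by simp⟩, fun z => ?_⟩
  simp [ufBoundaryAt]

lemma ufBoundsZero_neg {c : X → ℤ} (h : UFBoundsZero c) :
    UFBoundsZero (fun z => -(c z)) := by
  obtain ⟨b, ⟨⟨M, hM⟩, ⟨l, hl⟩, hfin⟩, hb⟩ := h
  refine ⟨fun z w => b w z, ⟨⟨M, fun z w => hM w z⟩, ⟨l, fun z w h => ?_⟩, fun z => ?_⟩, fun z => ?_⟩
  · rw [dist_comm]; exact hl w z h
  · refine (hfin z).subset ?_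
    intro w hw
    exact hw.symm
  · show -(c z) = (∑ᶠ w, b z w) - ∑ᶠ w, b w z
    rw [hb z]
    show _ = (∑ᶠ w, b z w) - ∑ᶠ w, b w z
    unfold ufBoundaryAt
    ring

lemma ufBoundsZero_add {c d : X → ℤ} (hc : UFBoundsZero c) (hd : UFBoundsZero d) :
    UFBoundsZero (fun z => c z + d z) := by
  obtain ⟨b1, ⟨⟨M1, hM1⟩, ⟨l1, hl1⟩, hfin1⟩, hb1⟩ := hc
  obtain ⟨b2, ⟨⟨M2, hM2⟩, ⟨l2, hl2⟩, hfin2⟩, hb2⟩ := hd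
  refine ⟨fun z w => b1 z w + b2 z w, ⟨⟨M1 + M2, fun z w =>
      (norm_add_le _ _).trans (add_le_add (hM1 z w) (hM2 z w))⟩,
    ⟨max l1 l2, fun z w h => ?_⟩, fun z => ?_⟩, fun z => ?_⟩
  · by_cases h1 : b1 z w = 0
    · by_cases h2 : b2 z w = 0
      · exact absurd (by simp [h1, h2] : (fun z w => b1 z w + b2 z w) z w = 0) h
      · exact (hl2 z w h2).trans (le_max_right _ _)
    · exact (hl1 z w h1).trans (le_max_left _ _)
  · refine ((hfin1 z).union (hfin2 z)).subset ?_
    intro w hw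
    by_contra hcon
    simp only [Set.mem_union, Set.mem_setOf_eq] at hcon
    push_neg at hcon
    obtain ⟨⟨a1, a2⟩, ⟨a3, a4⟩⟩ := hcon
    rcases hw with h | h
    · simp [a1, a3] at h
    · simp [a2, a4] at h
  · have s1 : (Function.support (fun w => b1 w z)).Finite :=
      (hfin1 z).subset (fun w hw => Or.inr hw)
    have s2 : (Function.support (fun w => b2 w z)).Finite :=
      (hfin2 z).subset (fun w hw => Or.inr hw)
    have s3 : (Function.support (fun w => b1 z w)).Finite :=
      (hfin1 z).subset (fun w hw => Or.inl hw)
    have s4 : (Function.support (fun w => b2 z w)).Finite :=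
      (hfin2 z).subset (fun w hw => Or.inl hw)
    show c z + d z = (∑ᶠ w, (b1 w z + b2 w z)) - ∑ᶠ w, (b1 z w + b2 z w)
    rw [finsum_add_distrib s1 s2, finsum_add_distrib s3 s4, hb1 z, hb2 z]
    unfold ufBoundaryAt
    ring

end Closure

open Classical in
lemma ufBoundsZero_of_bdd {X : Type*} [MetricSpace X]
    (ind : ∀ A : Set X, UFBoundsZero (fun z => if z ∈ A then (1 : ℤ) else 0)) :
    ∀ n : ℕ, ∀ c : X → ℤ, (∀ z, |c z| ≤ (n : ℤ)) → UFBoundsZero c := by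
  intro n
  induction n with
  | zero =>
    intro c hc
    refine ufBoundsZero_congr ufBoundsZero_zero (fun z => ?_)
    have := hc z
    rw [abs_le] at this
    omega
  | succ n ih =>
    intro c hc
    set A : Set X := {z | 0 < c z} with hA
    set B : Set X := {z | c z < 0} with hB
    set d : X → ℤ := fun z => (if z ∈ A then (1 : ℤ) else 0) - (if z ∈ B then 1 else 0)
      with hd
    have hdvals : ∀ z, (0 < c z → d z = 1) ∧ (c z < 0 → d z = -1) ∧ (c z = 0 → d z = 0) := by
      intro z
      refine ⟨fun h => ?_, fun h => ?_, fun h => ?_⟩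
      · simp [hd, hA, hB, Set.mem_setOf_eq, h, not_lt.2 h.le, lt_asymm h]
      · simp [hd, hA, hB, Set.mem_setOf_eq, h, not_lt.2 h.le, lt_asymm h]
      · simp [hd, hA, hB, Set.mem_setOf_eq, h]
    have hdz : UFBoundsZero d := by
      have h1 := ind A
      have h2 := ufBoundsZero_neg (ind B)
      refine ufBoundsZero_congr (ufBoundsZero_add h1 h2) (fun z => ?_)
      by_cases h1' : z ∈ A <;> by_cases h2' : z ∈ B <;> simp [hd, h1', h2', sub_eq_add_neg]
    have hc' : ∀ z, |c z - d z| ≤ (n : ℤ) := by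
      intro z
      have h1 := hc z
      rw [abs_le] at h1
      rw [abs_le]
      obtain ⟨ha, hb, h0⟩ := hdvals z
      rcases lt_trichotomy (c z) 0 with h | h | h
      · rw [hb h]; omega
      · rw [h0 h, h]; omega
      · rw [ha h]; omega
    have hc'ufb := ih (fun z => c z - d z) hc'
    refine ufBoundsZero_congr (ufBoundsZero_add hc'ufb hdz) (fun z => ?_)
    ring

lemma amenable_of_no_iso {X : Type*} [MetricSpace X] (hbg : BoundedGeometry X)
    (h : ∀ r : ℝ, r > 0 → ∀ ε : ℝ, ε > 0 → ∃ S : Set X, S.Finite ∧ S.Nonempty ∧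
      ((bdry r S).ncard : ℝ) < ε * S.ncard) : Amenable X := by
  have h' : ∀ i : ℕ, ∃ S : Set X, S.Finite ∧ S.Nonempty ∧
      ((bdry ((i : ℝ) + 1) S).ncard : ℝ) < (1 / ((i : ℝ) + 1)) * S.ncard := by
    intro i
    exact h ((i : ℝ) + 1) (by positivity) (1 / ((i : ℝ) + 1)) (by positivity)
  choose S hfin hne hlt using h'
  refine ⟨S, fun i => ⟨hfin i, hne i⟩, ?_⟩
  intro r hr
  have hpos : ∀ i, (0 : ℝ) < (S i).ncard := by
    intro i
    exact_mod_cast (Set.ncard_pos (hfin i)).2 (hne i)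
  apply tendsto_of_tendsto_of_tendsto_of_le_of_le' tendsto_const_nhds
    tendsto_one_div_add_atTop_nhds_zero_nat
  · exact Filter.Eventually.of_forall (fun i => by positivity)
  · have hev : ∀ᶠ i : ℕ in Filter.atTop, r ≤ (i : ℝ) + 1 := by
      filter_upwards [Filter.eventually_ge_atTop ⌈r⌉₊] with i hi
      calc r ≤ (⌈r⌉₊ : ℝ) := Nat.le_ceil r
        _ ≤ (i : ℝ) := by exact_mod_cast hi
        _ ≤ (i : ℝ) + 1 := by linarith
    filter_upwards [hev] with i hi
    rw [div_le_iff₀ (hpos i)]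
    have hmono : ((bdry r (S i)).ncard : ℝ) ≤ ((bdry ((i : ℝ) + 1) (S i)).ncard : ℝ) := by
      exact_mod_cast Set.ncard_le_ncard (bdry_mono hi _) (bdry_finite hbg (hfin i))
    calc ((bdry r (S i)).ncard : ℝ) ≤ ((bdry ((i : ℝ) + 1) (S i)).ncard : ℝ) := hmono
      _ ≤ (1 / ((i : ℝ) + 1)) * (S i).ncard := (hlt i).le
      _ = 1 / ((i : ℝ) + 1) * (S i).ncard := rfl

lemma growth_lemma {X : Type*} [MetricSpace X] (hbg : BoundedGeometry X)
    {r ε : ℝ} (hr : 0 < r) (hε : 0 < ε)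
    (hiso : ∀ S : Set X, S.Finite → S.Nonempty → ε * S.ncard ≤ ((bdry r S).ncard : ℝ)) :
    ∀ k : ℕ, ∀ S : Set X, S.Finite → S.Nonempty →
      (1 + ε) ^ k * S.ncard ≤ ((nbhd ((k : ℝ) * r) S).ncard : ℝ) := by
  intro k
  induction k with
  | zero =>
    intro S hS hne
    simp only [pow_zero, one_mul, Nat.cast_zero, zero_mul]
    exact_mod_cast Set.ncard_le_ncard (subset_nbhd le_rfl S) (nbhd_finite hbg hS)
  | succ k ih =>
    intro S hS hne
    set B := nbhd ((k : ℝ) * r) S with hB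
    have hBfin : B.Finite := nbhd_finite hbg hS
    have hBne : B.Nonempty := hne.mono (subset_nbhd (by positivity) S)
    have h1 : (1 + ε) ^ k * S.ncard ≤ (B.ncard : ℝ) := ih S hS hne
    have h2 : ε * B.ncard ≤ ((bdry r B).ncard : ℝ) := hiso B hBfin hBne
    have h3 : (nbhd r B).ncard = B.ncard + (bdry r B).ncard := by
      have hu : nbhd r B = B ∪ (nbhd r B \ B) := (Set.union_diff_cancel (subset_nbhd hr.le B)).symm
      rw [hu]
      have := Set.ncard_union_eq (Set.disjoint_sdiff_right (s := B) (t := nbhd r B)) hBfin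
        ((nbhd_finite hbg hBfin).subset Set.diff_subset)
      rw [this]
      rfl
    have hsub : nbhd r B ⊆ nbhd (((k : ℕ) + 1 : ℝ) * r) S := by
      rw [show (((k : ℕ) + 1 : ℝ)) * r = r + (k : ℝ) * r by ring]
      exact nbhd_nbhd S
    have h4 : ((nbhd r B).ncard : ℝ) ≤ ((nbhd (((k : ℕ) + 1 : ℝ) * r) S).ncard : ℝ) := by
      exact_mod_cast Set.ncard_le_ncard hsub (nbhd_finite hbg hS)
    have h3r : ((nbhd r B).ncard : ℝ) = (B.ncard : ℝ) + ((bdry r B).ncard : ℝ) := by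
      exact_mod_cast h3
    have key : (1 + ε) ^ (k + 1) * S.ncard ≤ (1 + ε) * B.ncard := by
      calc (1 + ε) ^ (k + 1) * S.ncard = (1 + ε) * ((1 + ε) ^ k * S.ncard) := by ring
        _ ≤ (1 + ε) * B.ncard := by
            apply mul_le_mul_of_nonneg_left h1 (by linarith)
    push_cast
    push_cast at h4
    linarith

lemma exists_doubling {X : Type*} [MetricSpace X] (hbg : BoundedGeometry X) {R : ℝ}
    (key : ∀ S : Set X, S.Finite → S.Nonempty → 3 * S.ncard ≤ (nbhd R S).ncard) :
    ∃ j : X × Bool → X, Function.Injective j ∧ ∀ p : X × Bool, dist (j p) p.1 ≤ R := by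
  classical
  obtain ⟨N, hN⟩ := hbg R
  set t : X × Bool → Finset X := fun p => (hN p.1).1.toFinset with ht
  have hall : ∀ s : Finset (X × Bool), s.card ≤ (s.biUnion t).card := by
    intro s
    rcases s.eq_empty_or_nonempty with rfl | hs
    · simp
    · set P : Finset X := s.image Prod.fst with hP
      have hPne : P.Nonempty := hs.image _
      have h1 : s.card ≤ P.card * 2 := by
        have hsub : s ⊆ P ×ˢ (Finset.univ : Finset Bool) := by
          intro p hp
          rw [Finset.mem_product]
          exact ⟨Finset.mem_image_of_mem _ hp, Finset.mem_univ _⟩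
        calc s.card ≤ (P ×ˢ (Finset.univ : Finset Bool)).card := Finset.card_le_card hsub
          _ = P.card * 2 := by rw [Finset.card_product]; simp
      have h2 : 3 * P.card ≤ (nbhd R (↑P : Set X)).ncard := by
        have := key ↑P P.finite_toSet (by exact_mod_cast hPne)
        simpa [Set.ncard_coe_finset] using this
      have h3 : (nbhd R (↑P : Set X)).ncard ≤ (s.biUnion t).card := by
        rw [← Set.ncard_coe_finset (s.biUnion t)]
        refine Set.ncard_le_ncard ?_ (s.biUnion t).finite_toSet
        rintro z ⟨a, haP, hd⟩
        obtain ⟨p, hps, hpa⟩ := Finset.mem_image.1 haP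
        refine Finset.mem_coe.2 (Finset.mem_biUnion.2 ⟨p, hps, ?_⟩)
        rw [ht]
        refine (hN p.1).1.mem_toFinset.2 ?_
        show dist z p.1 ≤ R
        rw [hpa]
        exact hd
      omega
  obtain ⟨j, hj1, hj2⟩ := (Finset.all_card_le_biUnion_card_iff_exists_injective t).1 hall
  refine ⟨j, hj1, fun p => ?_⟩
  have := hj2 p
  rw [ht] at this
  exact (hN p.1).1.mem_toFinset.1 this

lemma backward_dir {X : Type*} [MetricSpace X] (hbg : BoundedGeometry X)
    (hbd : UFBoundsZero (fun _ : X => (1 : ℤ))) : ¬ Amenable X := by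
  intro hAm
  obtain ⟨S, hS, hF⟩ := hAm
  obtain ⟨b, ⟨⟨M, hM⟩, ⟨l, hl⟩, hfin⟩, hb⟩ := hbd
  classical
  set r : ℝ := max l 1 with hrdef
  have hr1 : (0 : ℝ) < r := lt_of_lt_of_le one_pos (le_max_right _ _)
  obtain ⟨N, hN⟩ := hbg r
  set M' : ℝ := max M 1 with hM'def
  have hM'1 : (1 : ℝ) ≤ M' := le_max_right _ _
  have hM'b : ∀ z w : X, |((b z w : ℤ) : ℝ)| ≤ M' := by
    intro z w
    have h := hM z w
    rw [Int.norm_eq_abs] at h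
    exact h.trans (le_max_left _ _)
  set C : ℝ := 2 * M' * N + 1 with hCdef
  have hC : 0 < C := by positivity
  have claim : ∀ i, ((S i).ncard : ℝ) ≤ C * ((bdry r (S i)).ncard : ℝ) := by
    intro i
    set Sf : Finset X := (hS i).1.toFinset with hSfdef
    set E : X → Finset X := fun z => (hfin z).toFinset with hEdef
    set V : Finset X := Sf ∪ Sf.biUnion E with hVdef
    have hSfV : Sf ⊆ V := Finset.subset_union_left
    have hsum1 : ∀ z ∈ Sf, ufBoundaryAt b z = (∑ w ∈ V, b w z) - ∑ w ∈ V, b z w := by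
      intro z hz
      unfold ufBoundaryAt
      congr 1
      · apply finsum_eq_finset_sum_of_support_subset
        intro w hw
        have hwE : w ∈ E z := (hfin z).mem_toFinset.2 (Or.inr hw)
        exact Finset.mem_coe.2 (Finset.mem_union_right _ (Finset.mem_biUnion.2 ⟨z, hz, hwE⟩))
      · apply finsum_eq_finset_sum_of_support_subset
        intro w hw
        have hwE : w ∈ E z := (hfin z).mem_toFinset.2 (Or.inl hw)
        exact Finset.mem_coe.2 (Finset.mem_union_right _ (Finset.mem_biUnion.2 ⟨z, hz, hwE⟩))
    have hcard : ((Sf.card : ℤ)) = ∑ z ∈ Sf, ((∑ w ∈ V, b w z) - ∑ w ∈ V, b z w) := by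
      calc (Sf.card : ℤ) = ∑ _z ∈ Sf, (1 : ℤ) := by simp
        _ = ∑ z ∈ Sf, ufBoundaryAt b z := Finset.sum_congr rfl (fun z _ => hb z)
        _ = _ := Finset.sum_congr rfl hsum1
    have hcancel : ∑ z ∈ Sf, ∑ w ∈ Sf, b w z = ∑ z ∈ Sf, ∑ w ∈ Sf, b z w := Finset.sum_comm
    have hstep : ∀ z : X, (∑ w ∈ V, b w z) - ∑ w ∈ V, b z w
        = (∑ w ∈ V \ Sf, (b w z - b z w)) + ((∑ w ∈ Sf, b w z) - ∑ w ∈ Sf, b z w) := by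
      intro z
      rw [← Finset.sum_sdiff hSfV (f := fun w => b w z),
        ← Finset.sum_sdiff hSfV (f := fun w => b z w), Finset.sum_sub_distrib]
      ring
    have hcard2 : ((Sf.card : ℤ)) = ∑ z ∈ Sf, ∑ w ∈ V \ Sf, (b w z - b z w) := by
      rw [hcard, Finset.sum_congr rfl (fun z _ => hstep z), Finset.sum_add_distrib,
        Finset.sum_sub_distrib, hcancel, sub_self, add_zero]
    rw [Finset.sum_comm] at hcard2
    have hreal : ((Sf.card : ℝ)) =
        ∑ w ∈ V \ Sf, ∑ z ∈ Sf, (((b w z : ℤ) : ℝ) - ((b z w : ℤ) : ℝ)) := by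
      exact_mod_cast hcard2
    set g : X → ℝ := fun w => |∑ z ∈ Sf, (((b w z : ℤ) : ℝ) - ((b z w : ℤ) : ℝ))| with hgdef
    have habs : ((Sf.card : ℝ)) ≤ ∑ w ∈ V \ Sf, g w := by
      calc ((Sf.card : ℝ)) = |((Sf.card : ℝ))| := (abs_of_nonneg (by positivity)).symm
        _ = |∑ w ∈ V \ Sf, ∑ z ∈ Sf, (((b w z : ℤ) : ℝ) - ((b z w : ℤ) : ℝ))| := by rw [hreal]
        _ ≤ ∑ w ∈ V \ Sf, g w := Finset.abs_sum_le_sum_abs _ _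
    have hg0 : ∀ w ∈ V \ Sf, w ∉ bdry r (S i) → g w = 0 := by
      intro w hw hwb
      have hzero : ∀ z ∈ Sf, ((b w z : ℤ) : ℝ) - ((b z w : ℤ) : ℝ) = 0 := by
        intro z hz
        have hzS : z ∈ S i := (hS i).1.mem_toFinset.1 hz
        have hwS : w ∉ S i := fun hmem => (Finset.mem_sdiff.1 hw).2 ((hS i).1.mem_toFinset.2 hmem)
        have hbwz : b w z = 0 := by
          by_contra hne0
          have hd : dist w z ≤ r := (hl w z hne0).trans (le_max_left _ _)
          exact hwb ⟨⟨z, hzS, hd⟩, hwS⟩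
        have hbzw : b z w = 0 := by
          by_contra hne0
          have hd : dist w z ≤ r := by
            rw [dist_comm]; exact (hl z w hne0).trans (le_max_left _ _)
          exact hwb ⟨⟨z, hzS, hd⟩, hwS⟩
        rw [hbwz, hbzw]; simp
      show |∑ z ∈ Sf, (((b w z : ℤ) : ℝ) - ((b z w : ℤ) : ℝ))| = 0
      rw [Finset.sum_eq_zero hzero, abs_zero]
    have hgB : ∀ w : X, g w ≤ 2 * M' * N := by
      intro w
      have hfilt : ∑ z ∈ Sf.filter (fun z => dist z w ≤ r),
          |(((b w z : ℤ) : ℝ) - ((b z w : ℤ) : ℝ))|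
          = ∑ z ∈ Sf, |(((b w z : ℤ) : ℝ) - ((b z w : ℤ) : ℝ))| := by
        apply Finset.sum_filter_of_ne
        intro z _ hne0
        by_contra hd
        push_neg at hd
        have hbwz : b w z = 0 := by
          by_contra h0
          have : dist w z ≤ r := (hl w z h0).trans (le_max_left _ _)
          rw [dist_comm] at this
          exact absurd this (not_le.2 hd)
        have hbzw : b z w = 0 := by
          by_contra h0
          have : dist z w ≤ r := (hl z w h0).trans (le_max_left _ _)
          exact absurd this (not_le.2 hd)
        rw [hbwz, hbzw] at hne0
        simp at hne0
      have hterm : ∀ z ∈ Sf.filter (fun z => dist z w ≤ r),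
          |(((b w z : ℤ) : ℝ) - ((b z w : ℤ) : ℝ))| ≤ 2 * M' := by
        intro z _
        rw [sub_eq_add_neg]
        refine (abs_add_le _ _).trans ?_
        rw [abs_neg]
        have := add_le_add (hM'b w z) (hM'b z w)
        linarith
      have hcardf : ((Sf.filter (fun z => dist z w ≤ r)).card : ℝ) ≤ (N : ℝ) := by
        have hsub : ↑(Sf.filter (fun z => dist z w ≤ r)) ⊆ {y : X | dist y w ≤ r} :=
          fun z hz => (Finset.mem_filter.1 hz).2
        have h1 := Set.ncard_le_ncard hsub (hN w).1
        rw [Set.ncard_coe_finset] at h1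
        exact_mod_cast h1.trans (hN w).2
      calc g w ≤ ∑ z ∈ Sf, |(((b w z : ℤ) : ℝ) - ((b z w : ℤ) : ℝ))| :=
          Finset.abs_sum_le_sum_abs _ _
        _ = ∑ z ∈ Sf.filter (fun z => dist z w ≤ r),
            |(((b w z : ℤ) : ℝ) - ((b z w : ℤ) : ℝ))| := hfilt.symm
        _ ≤ (Sf.filter (fun z => dist z w ≤ r)).card • (2 * M') :=
          Finset.sum_le_card_nsmul _ _ _ hterm
        _ = ((Sf.filter (fun z => dist z w ≤ r)).card : ℝ) * (2 * M') := nsmul_eq_mul _ _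
        _ ≤ (N : ℝ) * (2 * M') := mul_le_mul_of_nonneg_right hcardf (by positivity)
        _ = 2 * M' * N := by ring
    have hfiltersum : ∑ w ∈ V \ Sf, g w
        = ∑ w ∈ (V \ Sf).filter (fun w => w ∈ bdry r (S i)), g w := by
      symm
      apply Finset.sum_subset (Finset.filter_subset _ _)
      intro w hw hnf
      refine hg0 w hw (fun hwb => hnf (Finset.mem_filter.2 ⟨hw, hwb⟩))
    have hfcard : ((((V \ Sf).filter (fun w => w ∈ bdry r (S i))).card : ℝ))
        ≤ ((bdry r (S i)).ncard : ℝ) := by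
      have hsub : ↑((V \ Sf).filter (fun w => w ∈ bdry r (S i))) ⊆ bdry r (S i) :=
        fun w hw => (Finset.mem_filter.1 hw).2
      have h1 := Set.ncard_le_ncard hsub (bdry_finite hbg (hS i).1)
      rw [Set.ncard_coe_finset] at h1
      exact_mod_cast h1
    have hlast : ∑ w ∈ (V \ Sf).filter (fun w => w ∈ bdry r (S i)), g w
        ≤ ((bdry r (S i)).ncard : ℝ) * (2 * M' * N) := by
      calc ∑ w ∈ (V \ Sf).filter (fun w => w ∈ bdry r (S i)), g w
          ≤ ((V \ Sf).filter (fun w => w ∈ bdry r (S i))).card • (2 * M' * N) :=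
            Finset.sum_le_card_nsmul _ _ _ (fun w _ => hgB w)
        _ = ((((V \ Sf).filter (fun w => w ∈ bdry r (S i))).card : ℝ)) * (2 * M' * N) :=
            nsmul_eq_mul _ _
        _ ≤ ((bdry r (S i)).ncard : ℝ) * (2 * M' * N) :=
            mul_le_mul_of_nonneg_right hfcard (by positivity)
    have hScard : ((S i).ncard : ℝ) = (Sf.card : ℝ) := by
      have h1 : (S i).ncard = Sf.card := by
        rw [hSfdef]
        exact Set.ncard_eq_toFinset_card (S i) (hS i).1
      exact_mod_cast h1
    have hbn : (0 : ℝ) ≤ ((bdry r (S i)).ncard : ℝ) := by positivity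
    rw [hScard]
    calc (Sf.card : ℝ) ≤ ∑ w ∈ V \ Sf, g w := habs
      _ = ∑ w ∈ (V \ Sf).filter (fun w => w ∈ bdry r (S i)), g w := hfiltersum
      _ ≤ ((bdry r (S i)).ncard : ℝ) * (2 * M' * N) := hlast
      _ ≤ C * ((bdry r (S i)).ncard : ℝ) := by rw [hCdef]; nlinarith
  have hev := (hF r hr1).eventually_lt_const (by positivity : (0 : ℝ) < 1 / C)
  obtain ⟨i, hi⟩ := hev.exists
  have hSpos : (0 : ℝ) < (S i).ncard := by
    exact_mod_cast (Set.ncard_pos (hS i).1).2 (hS i).2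
  have hclaim := claim i
  rw [div_lt_iff₀ hSpos] at hi
  have h5 : C * ((bdry r (S i)).ncard : ℝ) < C * (1 / C * ((S i).ncard : ℝ)) :=
    mul_lt_mul_of_pos_left hi hC
  have h6 : C * (1 / C * ((S i).ncard : ℝ)) = ((S i).ncard : ℝ) := by
    field_simp
  rw [h6] at h5
  linarith

/-- A uniformly discrete space of bounded geometry is non-amenable iff
`H₀^{uf}(X; ℤ) = 0`, i.e. every uniformly bounded integer 0-chain bounds. -/
theorem stmt15 {X : Type*} [MetricSpace X]
    (hud : UniformlyDiscrete X) (hbg : BoundedGeometry X) :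
    ¬ Amenable X ↔ ∀ c : X → ℤ, (∃ K : ℤ, ∀ z, |c z| ≤ K) → UFBoundsZero c := by
  constructor
  · intro hna c hc
    obtain ⟨K, hK⟩ := hc
    have hiso : ∃ r : ℝ, 0 < r ∧ ∃ ε : ℝ, 0 < ε ∧
        ∀ S : Set X, S.Finite → S.Nonempty → ε * S.ncard ≤ ((bdry r S).ncard : ℝ) := by
      by_contra hcon
      push_neg at hcon
      exact hna (amenable_of_no_iso hbg (fun r hr ε hε => hcon r hr ε hε))
    obtain ⟨r, hr, ε, hε, hiso⟩ := hiso
    obtain ⟨k, hk⟩ := pow_unbounded_of_one_lt (3 : ℝ) (by linarith : (1 : ℝ) < 1 + ε)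
    have key : ∀ S : Set X, S.Finite → S.Nonempty →
        3 * S.ncard ≤ (nbhd ((k : ℝ) * r) S).ncard := by
      intro S hS hne
      have hg := growth_lemma hbg hr hε hiso k S hS hne
      have hs0 : (0 : ℝ) ≤ (S.ncard : ℝ) := by positivity
      have h3 : (3 : ℝ) * S.ncard ≤ ((nbhd ((k : ℝ) * r) S).ncard : ℝ) :=
        le_trans (mul_le_mul_of_nonneg_right hk.le hs0) hg
      exact_mod_cast h3
    obtain ⟨j, hjinj, hjd⟩ := exists_doubling hbg key
    refine ufBoundsZero_of_bdd (fun A => indicator_ufBoundsZero hbg j hjinj hjd A)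
      K.toNat c (fun z => ?_)
    exact (hK z).trans (Int.self_le_toNat K)
  · intro h
    exact backward_dir hbg (h (fun _ => 1) ⟨1, fun z => by norm_num⟩)
end

section
/- If Z is a non-amenable uniformly discrete space of bounded geometry, then there exists a bijection f : Z × {0,1} → Z such that d(f(z,ε), z) is uniformly bounded and f(z,ε) ≠ z for all (z,ε). -/
open scoped ENNReal

/-- Coarse Lipschitz map. -/
def CoarseLipschitz {X Y : Type*} [MetricSpace X] [MetricSpace Y] (f : X → Y) : Prop :=
  ∃ K L : ℝ, ∀ x₁ x₂ : X, dist (f x₁) (f x₂) ≤ K * dist x₁ x₂ + L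

/-!
Give each point `(z, ε)` of `Z × {0,1}` the punctured ball of radius `r` around `z` as its
set of candidate images. For a finite family `s` with projection `T`, these candidates cover
the `r`-boundary of `T`, and non-amenability makes that boundary at least `2 |T| ≥ |s|` for
large `r`; so Hall's marriage theorem (in its infinite form) gives an injection
`Z × {0,1} → Z` moving every point by a distance in `(0, r]`. Composing it with
`z ↦ (z, 0)` gives an injection back whose values are again displaced by a distance in
`(0, r]`, and Schröder–Bernstein, applied relative to this displacement relation, produces
the bijection.
-/

open Finset Function

section Expansion

variable {Z : Type*} [MetricSpace Z]

theorem exists_card_mul_le_ncard_bdry (k : ℕ) (hk : 0 < k)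
    (hna : ∀ C > (0 : ℝ), ∃ r > (0 : ℝ), ∀ S : Set Z, S.Finite →
      (S.ncard : ℝ) ≤ C * ((bdry r S).ncard : ℝ)) :
    ∃ r : ℝ, ∀ S : Finset Z, k * #S ≤ (bdry r (S : Set Z)).ncard := by
  obtain ⟨r, -, hr⟩ := hna (1 / k) (by positivity)
  refine ⟨r, fun S => ?_⟩
  have hS := hr S S.finite_toSet
  rw [Set.ncard_coe_finset, div_mul_eq_mul_div, one_mul,
    le_div_iff₀ (by exact_mod_cast hk)] at hS
  exact_mod_cast (mul_comm (#S : ℝ) k ▸ hS)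

theorem bdry_subset_biUnion_punctured_ball [DecidableEq Z] {ι : Type*} {r : ℝ}
    (s : Finset (Z × ι)) (t : Z × ι → Finset Z)
    (ht : ∀ p y, dist y p.1 ≤ r → y ≠ p.1 → y ∈ t p) :
    bdry r (s.image Prod.fst : Set Z) ⊆ s.biUnion t := by
  rintro y ⟨⟨a, haT, hya⟩, hyT⟩
  obtain ⟨p, hp, rfl⟩ := Finset.mem_image.mp haT
  exact Finset.mem_biUnion.mpr ⟨p, hp, ht p y hya fun hy => hyT (hy ▸ haT)⟩

theorem exists_injective_punctured_ball_of_expansion {ι : Type*} [Fintype ι] {r : ℝ}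
    (hfin : ∀ z : Z, {y : Z | dist y z ≤ r}.Finite)
    (hexp : ∀ S : Finset Z, Fintype.card ι * #S ≤ (bdry r (S : Set Z)).ncard) :
    ∃ F : Z × ι → Z, Injective F ∧ ∀ p, dist (F p) p.1 ≤ r ∧ F p ≠ p.1 := by
  classical
  let t : Z × ι → Finset Z := fun p => (hfin p.1).toFinset.erase p.1
  have hmem : ∀ p y, y ∈ t p ↔ dist y p.1 ≤ r ∧ y ≠ p.1 := fun p y => by
    simp [t, and_comm]
  have hall : ∀ s : Finset (Z × ι), #s ≤ #(s.biUnion t) := fun s => by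
    set T := s.image Prod.fst
    calc #s ≤ #(T ×ˢ (univ : Finset ι)) :=
          card_le_card fun p hp => mem_product.mpr ⟨mem_image_of_mem _ hp, mem_univ _⟩
      _ = Fintype.card ι * #T := by rw [card_product, card_univ, mul_comm]
      _ ≤ (bdry r (T : Set Z)).ncard := hexp T
      _ ≤ #(s.biUnion t) := by
          rw [← Set.ncard_coe_finset (s.biUnion t)]
          exact Set.ncard_le_ncard
            (bdry_subset_biUnion_punctured_ball s t fun p y h₁ h₂ => (hmem p y).mpr ⟨h₁, h₂⟩)
            (Finset.finite_toSet _)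
  obtain ⟨F, hFinj, hF⟩ := (all_card_le_biUnion_card_iff_exists_injective t).mp hall
  exact ⟨F, hFinj, fun p => (hmem p (F p)).mp (hF p)⟩

end Expansion

theorem stmt16_general {Z : Type*} [MetricSpace Z]
    (hbg : BoundedGeometry Z)
    (hna : ∀ C > (0 : ℝ), ∃ r > (0 : ℝ), ∀ S : Set Z, S.Finite →
      (S.ncard : ℝ) ≤ C * ((bdry r S).ncard : ℝ)) :
    ∃ f : Z × Bool → Z, Function.Bijective f ∧
      (∃ C : ℝ, ∀ p : Z × Bool, dist (f p) p.1 ≤ C) ∧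
      ∀ p : Z × Bool, f p ≠ p.1 := by
  obtain ⟨r, hexp⟩ := exists_card_mul_le_ncard_bdry 2 two_pos hna
  obtain ⟨F, hFinj, hF⟩ := exists_injective_punctured_ball_of_expansion (ι := Bool)
    (fun z => ((hbg r).choose_spec z).1) hexp
  let G : Z → Z × Bool := fun z => (F (z, true), false)
  have hGinj : Injective G := fun z₁ z₂ h =>
    congrArg Prod.fst (hFinj (congrArg Prod.fst h))
  obtain ⟨f, hf, hfR⟩ := Embedding.schroeder_bernstein_of_rel hFinj hGinj
    (fun p z => dist z p.1 ≤ r ∧ z ≠ p.1) hF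
    (fun z => ⟨dist_comm z _ ▸ (hF (z, true)).1, (hF (z, true)).2.symm⟩)
  exact ⟨f, hf, ⟨r, fun p => (hfR p).1⟩, fun p => (hfR p).2⟩

/-- If `Z` is non-amenable (isoperimetric form), there is a bijection
`f : Z × {0,1} → Z` at uniformly bounded distance from the projection and nowhere
equal to it. -/
theorem stmt16 {Z : Type*} [MetricSpace Z]
    (hud : UniformlyDiscrete Z) (hbg : BoundedGeometry Z)
    (hna : ∀ C > (0 : ℝ), ∃ r > (0 : ℝ), ∀ S : Set Z, S.Finite →
      (S.ncard : ℝ) ≤ C * ((bdry r S).ncard : ℝ)) :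
    ∃ f : Z × Bool → Z, Function.Bijective f ∧
      (∃ C : ℝ, ∀ p : Z × Bool, dist (f p) p.1 ≤ C) ∧
      ∀ p : Z × Bool, f p ≠ p.1 :=
  stmt16_general hbg hna
end

section
/- If Γ₁ and Γ₂ are finitely generated groups and there is a bijective bilipschitz equivalence Γ₁ → Γ₂ (with respect to word metrics) sending 1 to 1, then for any finitely generated group G, the free products Γ₁ * G and Γ₂ * G are bilipschitz equivalent, via the map applying the equivalence letterwise to the Γ-syllables of reduced words. -/
/-!
Let `Θ` replace every `Γ₁`-syllable `x` of a reduced word by `θ x`. For a generator `s` of one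
factor write `a = w * x`, where the reduced word `w` does not end in that factor and `x` lies in it
(possibly `x = 1`); then `a * s = w * (x * s)` and `Θ(a)⁻¹ * Θ(a * s) = θ(x)⁻¹ * θ(x * s)`, of
length at most `K * |s| ≤ K`. So `Θ` moves neighbours by at most `K`, hence is `K`-Lipschitz; the
letterwise map of `θ⁻¹` is its inverse and gives the other bound. Mathlib has reduced words only
for indexed free products `Monoid.CoprodI`, so `Γ₁ ∗ G` is identified with the free product of a
`Bool`-indexed family.
-/

/-- Word length of `h` with respect to a (symmetrized) generating set `S`. -/
noncomputable def wordLength {H : Type*} [Group H] (S : Set H) (h : H) : ℕ :=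
  sInf {n : ℕ | ∃ l : List H, l.length = n ∧ (∀ x ∈ l, x ∈ S ∨ x⁻¹ ∈ S) ∧ l.prod = h}

/-- Word metric distance associated to a generating set `S`. -/
noncomputable def wordDist {H : Type*} [Group H] (S : Set H) (x y : H) : ℕ :=
  wordLength S (x⁻¹ * y)

open Monoid

section WordLength

variable {H H' : Type*} [Group H] [Group H'] {S : Set H}

theorem wordLength_le_length {h : H} {l : List H} (hl : ∀ x ∈ l, x ∈ S ∨ x⁻¹ ∈ S)
    (hp : l.prod = h) : wordLength S h ≤ l.length :=
  Nat.sInf_le ⟨l, rfl, hl, hp⟩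

theorem exists_length_eq_wordLength {h : H} (hh : h ∈ Subgroup.closure S) :
    ∃ l : List H, l.length = wordLength S h ∧ (∀ x ∈ l, x ∈ S ∨ x⁻¹ ∈ S) ∧ l.prod = h := by
  rw [← Subgroup.mem_toSubmonoid, Subgroup.closure_toSubmonoid] at hh
  obtain ⟨l, hl, hp⟩ := Submonoid.exists_list_of_mem_closure hh
  exact Nat.sInf_mem
    (s := {n | ∃ l : List H, l.length = n ∧ (∀ x ∈ l, x ∈ S ∨ x⁻¹ ∈ S) ∧ l.prod = h})
    ⟨l.length, l, rfl, fun x hx => hl x hx, hp⟩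

theorem wordLength_one : wordLength S 1 = 0 :=
  Nat.le_zero.mp (wordLength_le_length (l := []) (by simp) rfl)

theorem wordLength_le_one {s : H} (hs : s ∈ S ∨ s⁻¹ ∈ S) : wordLength S s ≤ 1 :=
  wordLength_le_length (l := [s]) (by simpa using hs) (by simp)

theorem wordLength_mul_le {a b : H} (ha : a ∈ Subgroup.closure S)
    (hb : b ∈ Subgroup.closure S) : wordLength S (a * b) ≤ wordLength S a + wordLength S b := by
  obtain ⟨la, hlen_a, hla, rfl⟩ := exists_length_eq_wordLength ha
  obtain ⟨lb, hlen_b, hlb, rfl⟩ := exists_length_eq_wordLength hb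
  rw [← hlen_a, ← hlen_b, ← List.length_append, ← List.prod_append]
  exact wordLength_le_length (fun x hx => (List.mem_append.1 hx).elim (hla x) (hlb x)) rfl

theorem forall_mem_map_mem_or_inv_mem {F : Type*} [FunLike F H H'] [MonoidHomClass F H H']
    (f : F) {T : Set H'} (hST : f '' S ⊆ T) {l : List H} (hl : ∀ x ∈ l, x ∈ S ∨ x⁻¹ ∈ S) :
    ∀ y ∈ l.map f, y ∈ T ∨ y⁻¹ ∈ T := by
  simp only [List.mem_map]
  rintro _ ⟨x, hx, rfl⟩
  exact (hl x hx).imp (fun h => hST ⟨x, h, rfl⟩) (fun h => hST ⟨x⁻¹, h, map_inv f x⟩)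

theorem wordLength_map_le (f : H →* H') {T : Set H'} (hST : f '' S ⊆ T) {h : H}
    (hh : h ∈ Subgroup.closure S) : wordLength T (f h) ≤ wordLength S h := by
  obtain ⟨l, hlen, hl, rfl⟩ := exists_length_eq_wordLength hh
  rw [← hlen, ← List.length_map f, map_list_prod]
  exact wordLength_le_length (forall_mem_map_mem_or_inv_mem f hST hl) rfl

theorem wordLength_map_mulEquiv (e : H ≃* H') (S : Set H) (h : H) :
    wordLength (e '' S) (e h) = wordLength S h := by
  unfold wordLength
  congr 1
  ext n
  constructor
  · rintro ⟨l, rfl, hl, hp⟩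
    refine ⟨l.map e.symm, List.length_map _, forall_mem_map_mem_or_inv_mem e.symm ?_ hl, ?_⟩
    · exact (e.toEquiv.symm_image_image S).subset
    · rw [← map_list_prod, hp, e.symm_apply_apply]
  · rintro ⟨l, rfl, hl, rfl⟩
    exact ⟨l.map e, List.length_map _, forall_mem_map_mem_or_inv_mem e subset_rfl hl,
      (map_list_prod e l).symm⟩

theorem wordDist_map_mulEquiv (e : H ≃* H') (S : Set H) (x y : H) :
    wordDist (e '' S) (e x) (e y) = wordDist S x y := by
  rw [wordDist, wordDist, ← map_inv, ← map_mul, wordLength_map_mulEquiv]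

theorem closure_image_mulEquiv (e : H ≃* H') (hS : Subgroup.closure S = ⊤) :
    Subgroup.closure (e '' S) = ⊤ := by
  rw [← e.coe_toMonoidHom, ← MonoidHom.map_closure, hS]
  exact Subgroup.map_top_of_surjective _ e.surjective

section Lipschitz

variable {Φ : H → H'} {S' : Set H'} {C : ℝ}

theorem wordLength_le_of_step_le (hS' : Subgroup.closure S' = ⊤)
    (hstep : ∀ a s, s ∈ S ∨ s⁻¹ ∈ S → (wordLength S' ((Φ a)⁻¹ * Φ (a * s)) : ℝ) ≤ C)
    (a : H) {l : List H} (hl : ∀ s ∈ l, s ∈ S ∨ s⁻¹ ∈ S) :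
    (wordLength S' ((Φ a)⁻¹ * Φ (a * l.prod)) : ℝ) ≤ C * l.length := by
  induction l generalizing a with
  | nil => simp [wordLength_one]
  | cons s l ih =>
    have hsplit : (Φ a)⁻¹ * Φ (a * (s :: l).prod) =
        ((Φ a)⁻¹ * Φ (a * s)) * ((Φ (a * s))⁻¹ * Φ (a * s * l.prod)) := by
      simp [mul_assoc]
    calc (wordLength S' ((Φ a)⁻¹ * Φ (a * (s :: l).prod)) : ℝ)
        ≤ wordLength S' ((Φ a)⁻¹ * Φ (a * s)) +
            wordLength S' ((Φ (a * s))⁻¹ * Φ (a * s * l.prod)) := by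
          rw [hsplit]
          exact_mod_cast wordLength_mul_le (hS' ▸ Subgroup.mem_top _) (hS' ▸ Subgroup.mem_top _)
      _ ≤ C + C * l.length :=
          add_le_add (hstep a s (hl s List.mem_cons_self))
            (ih (a * s) fun t ht => hl t (List.mem_cons_of_mem s ht))
      _ = C * (s :: l).length := by rw [List.length_cons]; push_cast; ring

theorem wordDist_le_of_step_le (hS : Subgroup.closure S = ⊤) (hS' : Subgroup.closure S' = ⊤)
    (hstep : ∀ a s, s ∈ S ∨ s⁻¹ ∈ S → (wordLength S' ((Φ a)⁻¹ * Φ (a * s)) : ℝ) ≤ C)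
    (u v : H) : (wordDist S' (Φ u) (Φ v) : ℝ) ≤ C * wordDist S u v := by
  obtain ⟨l, hlen, hl, hp⟩ := exists_length_eq_wordLength (hS ▸ Subgroup.mem_top (u⁻¹ * v))
  have := wordLength_le_of_step_le hS' hstep u hl
  rwa [hp, mul_inv_cancel_left, hlen] at this

end Lipschitz

end WordLength

namespace Monoid.CoprodI

variable {ι : Type*} {M M' : ι → Type*}

section Monoid

variable [∀ i, Monoid (M i)] [∀ i, Monoid (M' i)]

namespace Word

def map (θ : ∀ i, M i ≃ M' i) (hθ : ∀ i, θ i 1 = 1) (w : Word M) : Word M' where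
  toList := w.toList.map fun l => ⟨l.1, θ l.1 l.2⟩
  ne_one := by
    simp only [List.mem_map]
    rintro _ ⟨⟨i, m⟩, hm, rfl⟩ h
    exact w.ne_one _ hm ((θ i).injective (h.trans (hθ i).symm))
  chain_ne := (List.isChain_map _).2 w.chain_ne

theorem prod_map (θ : ∀ i, M i ≃ M' i) (hθ : ∀ i, θ i 1 = 1) (w : Word M) :
    (w.map θ hθ).prod = (w.toList.map fun l => of (θ l.1 l.2)).prod := by
  simp [map, prod, Function.comp_def]

theorem map_map (θ : ∀ i, M i ≃ M' i) (hθ : ∀ i, θ i 1 = 1) (θ' : ∀ i, M' i ≃ M i)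
    (hθ' : ∀ i, θ' i 1 = 1) (hinv : ∀ i, Function.LeftInverse (θ' i) (θ i)) (w : Word M) :
    (w.map θ hθ).map θ' hθ' = w := by
  ext1
  simp [map, Function.comp_def, hinv _ _]

def concat (w : Word M) {i : ι} (m : M i) (hm : m ≠ 1)
    (hlast : ∀ l ∈ w.toList.getLast?, l.1 ≠ i) : Word M where
  toList := w.toList ++ [⟨i, m⟩]
  ne_one := by
    simp only [List.mem_append, List.mem_singleton]
    rintro l (hl | rfl)
    exacts [w.ne_one l hl, hm]
  chain_ne := List.isChain_append.2 ⟨w.chain_ne, List.isChain_singleton _,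
    fun l hl _ h => (Option.mem_some_iff.1 h) ▸ hlast l hl⟩

theorem prod_concat (w : Word M) {i : ι} (m : M i) (hm : m ≠ 1)
    (hlast : ∀ l ∈ w.toList.getLast?, l.1 ≠ i) : (w.concat m hm hlast).prod = w.prod * of m := by
  simp [concat, prod]

end Word

variable [DecidableEq ι] [∀ i, DecidableEq (M i)]

theorem exists_eq_prod_mul_of (a : CoprodI M) (i : ι) :
    ∃ (w : Word M) (x : M i), (∀ l ∈ w.toList.getLast?, l.1 ≠ i) ∧ a = w.prod * of x := by
  set w := Word.equiv a
  have ha : a = w.prod := (Word.equiv.symm_apply_apply a).symm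
  by_cases hlast : ∀ l ∈ w.toList.getLast?, l.1 ≠ i
  · exact ⟨w, 1, hlast, by rw [map_one, mul_one, ha]⟩
  push Not at hlast
  obtain ⟨⟨j, x⟩, hl, rfl⟩ := hlast
  obtain ⟨L, hL⟩ : ∃ L, w.toList = L ++ [⟨j, x⟩] := ⟨_, (List.dropLast_append_getLast? _ hl).symm⟩
  have hchain := w.chain_ne
  rw [hL, List.isChain_append] at hchain
  refine ⟨⟨L, fun l hl => w.ne_one l (hL ▸ List.mem_append_left _ hl), hchain.1⟩, x,
    fun l hl => hchain.2.2 l hl _ rfl, ?_⟩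
  simp [ha, Word.prod, hL]

def letterwise (θ : ∀ i, M i ≃ M' i) (hθ : ∀ i, θ i 1 = 1) (a : CoprodI M) : CoprodI M' :=
  ((Word.equiv a).map θ hθ).prod

variable (θ : ∀ i, M i ≃ M' i) (hθ : ∀ i, θ i 1 = 1)

theorem letterwise_prod (w : Word M) : letterwise θ hθ w.prod = (w.map θ hθ).prod :=
  congrArg (fun w => (Word.map θ hθ w).prod) (Word.equiv.apply_symm_apply w)

theorem letterwise_one : letterwise θ hθ 1 = 1 :=
  letterwise_prod θ hθ Word.empty

theorem letterwise_prod_mul_of (w : Word M) {i : ι} (hlast : ∀ l ∈ w.toList.getLast?, l.1 ≠ i)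
    (y : M i) : letterwise θ hθ (w.prod * of y) = letterwise θ hθ w.prod * of (θ i y) := by
  by_cases hy : y = 1
  · simp [hy, hθ]
  rw [← Word.prod_concat w y hy hlast, letterwise_prod, letterwise_prod, Word.prod_map,
    Word.prod_map]
  simp [Word.concat]

theorem letterwise_of {i : ι} (m : M i) : letterwise θ hθ (of m) = of (θ i m) := by
  simpa [letterwise_one] using letterwise_prod_mul_of θ hθ Word.empty (by simp) m

theorem letterwise_letterwise [∀ i, DecidableEq (M' i)] (θ' : ∀ i, M' i ≃ M i)
    (hθ' : ∀ i, θ' i 1 = 1) (hinv : ∀ i, Function.LeftInverse (θ' i) (θ i)) (a : CoprodI M) :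
    letterwise θ' hθ' (letterwise θ hθ a) = a := by
  change letterwise θ' hθ' ((Word.equiv a).map θ hθ).prod = a
  rw [letterwise_prod, Word.map_map θ hθ θ' hθ' hinv]
  exact Word.equiv.symm_apply_apply a

end Monoid

section Group

variable {G G' : ι → Type*} [∀ i, Group (G i)] [∀ i, Group (G' i)]

theorem closure_iUnion_image_of {S : ∀ i, Set (G i)} (hS : ∀ i, Subgroup.closure (S i) = ⊤) :
    Subgroup.closure (⋃ i, (of : G i →* CoprodI G) '' S i) = ⊤ := by
  simp_rw [Subgroup.closure_iUnion, ← MonoidHom.map_closure, hS, ← MonoidHom.range_eq_map]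
  rw [← range_eq_iSup, lift_of', MonoidHom.range_eq_top]
  exact Function.surjective_id

variable [DecidableEq ι] [∀ i, DecidableEq (G i)] (θ : ∀ i, G i ≃ G' i) (hθ : ∀ i, θ i 1 = 1)

theorem exists_letterwise_inv_mul_letterwise_mul_of (a : CoprodI G) {i : ι} (m : G i) :
    ∃ x : G i, (letterwise θ hθ a)⁻¹ * letterwise θ hθ (a * of m) =
      of ((θ i x)⁻¹ * θ i (x * m)) := by
  obtain ⟨w, x, hlast, rfl⟩ := exists_eq_prod_mul_of a i
  refine ⟨x, ?_⟩
  rw [mul_assoc, ← map_mul, letterwise_prod_mul_of θ hθ w hlast,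
    letterwise_prod_mul_of θ hθ w hlast, mul_inv_rev, mul_assoc, inv_mul_cancel_left, ← map_inv,
    ← map_mul]

theorem wordDist_letterwise_le {S : ∀ i, Set (G i)} {S' : ∀ i, Set (G' i)}
    (hS : ∀ i, Subgroup.closure (S i) = ⊤) (hS' : ∀ i, Subgroup.closure (S' i) = ⊤)
    {K : ℝ} (hK : 0 ≤ K)
    (hθK : ∀ i x y, (wordDist (S' i) (θ i x) (θ i y) : ℝ) ≤ K * wordDist (S i) x y)
    (u v : CoprodI G) :
    (wordDist (⋃ i, (of : G' i →* CoprodI G') '' S' i)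
        (letterwise θ hθ u) (letterwise θ hθ v) : ℝ) ≤
      K * wordDist (⋃ i, (of : G i →* CoprodI G) '' S i) u v := by
  refine wordDist_le_of_step_le (closure_iUnion_image_of hS) (closure_iUnion_image_of hS') ?_ u v
  intro a s hs
  obtain ⟨i, m, rfl, hm⟩ : ∃ i, ∃ m : G i, s = of m ∧ (m ∈ S i ∨ m⁻¹ ∈ S i) := by
    simp only [Set.mem_iUnion, Set.mem_image] at hs
    rcases hs with ⟨i, m, hm, rfl⟩ | ⟨i, m, hm, hs⟩
    · exact ⟨i, m, rfl, .inl hm⟩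
    · exact ⟨i, m⁻¹, by rw [map_inv, hs, inv_inv], .inr (by rwa [inv_inv])⟩
  obtain ⟨x, hx⟩ := exists_letterwise_inv_mul_letterwise_mul_of θ hθ a m
  calc (wordLength (⋃ i, (of : G' i →* CoprodI G') '' S' i)
        ((letterwise θ hθ a)⁻¹ * letterwise θ hθ (a * of m)) : ℝ)
      ≤ wordDist (S' i) (θ i x) (θ i (x * m)) := by
        rw [hx]
        exact_mod_cast wordLength_map_le of (Set.subset_iUnion (fun j => of '' S' j) i)
          (hS' i ▸ Subgroup.mem_top _)
    _ ≤ K * wordDist (S i) x (x * m) := hθK i x (x * m)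
    _ ≤ K := by
        rw [wordDist, inv_mul_cancel_left]
        exact mul_le_of_le_one_right hK (by exact_mod_cast wordLength_le_one hm)

end Group

end Monoid.CoprodI

namespace Monoid.Coprod

universe u v u' v'

def boolFamily (A : Type u) (B : Type v) : Bool → Type (max u v)
  | true => ULift.{v} A
  | false => ULift.{u} B

section Family

variable (A : Type u) (B : Type v) [Group A] [Group B]

instance : ∀ b, Group (boolFamily A B b)
  | true => inferInstanceAs (Group (ULift A))
  | false => inferInstanceAs (Group (ULift B))

noncomputable instance : ∀ b, DecidableEq (boolFamily A B b) := fun _ => Classical.decEq _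

def liftTrue : A ≃* boolFamily A B true := MulEquiv.ulift.symm

def liftFalse : B ≃* boolFamily A B false := MulEquiv.ulift.symm

def ofBoolFamily : ∀ b, boolFamily A B b →* Coprod A B
  | true => inl.comp (liftTrue A B).symm.toMonoidHom
  | false => inr.comp (liftFalse A B).symm.toMonoidHom

def equivCoprodI : Coprod A B ≃* CoprodI (boolFamily A B) :=
  MonoidHom.toMulEquiv
    (lift (CoprodI.of.comp (liftTrue A B).toMonoidHom)
      (CoprodI.of.comp (liftFalse A B).toMonoidHom))
    (CoprodI.lift (ofBoolFamily A B))
    (by ext <;> simp [ofBoolFamily])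
    (by ext ⟨⟩ x <;> simp [ofBoolFamily])

@[simp]
theorem equivCoprodI_inl (a : A) : equivCoprodI A B (inl a) = CoprodI.of (liftTrue A B a) := by
  simp [equivCoprodI]

@[simp]
theorem equivCoprodI_inr (b : B) : equivCoprodI A B (inr b) = CoprodI.of (liftFalse A B b) := by
  simp [equivCoprodI]

end Family

section Letterwise

variable {A : Type u} {B : Type v} {A' : Type u'} {B' : Type v'}
  [Group A] [Group B] [Group A'] [Group B']

def boolFamilySet (SA : Set A) (SB : Set B) : ∀ b, Set (boolFamily A B b)
  | true => liftTrue A B '' SA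
  | false => liftFalse A B '' SB

theorem closure_boolFamilySet {SA : Set A} {SB : Set B} (hSA : Subgroup.closure SA = ⊤)
    (hSB : Subgroup.closure SB = ⊤) : ∀ b, Subgroup.closure (boolFamilySet SA SB b) = ⊤
  | true => closure_image_mulEquiv _ hSA
  | false => closure_image_mulEquiv _ hSB

theorem image_equivCoprodI (SA : Set A) (SB : Set B) :
    equivCoprodI A B '' (inl '' SA ∪ inr '' SB) =
      ⋃ b, (CoprodI.of : boolFamily A B b →* _) '' boolFamilySet SA SB b := by
  rw [Set.image_union, Set.image_image, Set.image_image]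
  ext z
  simp [boolFamilySet, Bool.exists_bool, or_comm]

theorem wordDist_equivCoprodI (SA : Set A) (SB : Set B) (u v : Coprod A B) :
    wordDist (⋃ b, (CoprodI.of : boolFamily A B b →* _) '' boolFamilySet SA SB b)
      (equivCoprodI A B u) (equivCoprodI A B v) = wordDist (inl '' SA ∪ inr '' SB) u v := by
  rw [← image_equivCoprodI, wordDist_map_mulEquiv]

def boolFamilyEquiv (f : A ≃ A') (g : B ≃ B') : ∀ b, boolFamily A B b ≃ boolFamily A' B' b
  | true => (liftTrue A B).toEquiv.symm.trans (f.trans (liftTrue A' B').toEquiv)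
  | false => (liftFalse A B).toEquiv.symm.trans (g.trans (liftFalse A' B').toEquiv)

variable (f : A ≃ A') (g : B ≃ B')

@[simp]
theorem boolFamilyEquiv_liftTrue (a : A) :
    boolFamilyEquiv f g true (liftTrue A B a) = liftTrue A' B' (f a) := by
  simp [boolFamilyEquiv]

@[simp]
theorem boolFamilyEquiv_liftFalse (b : B) :
    boolFamilyEquiv f g false (liftFalse A B b) = liftFalse A' B' (g b) := by
  simp [boolFamilyEquiv]

theorem leftInverse_boolFamilyEquiv_symm :
    ∀ b, Function.LeftInverse (boolFamilyEquiv f.symm g.symm b) (boolFamilyEquiv f g b)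
  | true, x => by simp [boolFamilyEquiv]
  | false, x => by simp [boolFamilyEquiv]

theorem wordDist_boolFamilyEquiv_le {SA : Set A} {SB : Set B} {SA' : Set A'} {SB' : Set B'}
    {K : ℝ} (hfK : ∀ x y, (wordDist SA' (f x) (f y) : ℝ) ≤ K * wordDist SA x y)
    (hgK : ∀ x y, (wordDist SB' (g x) (g y) : ℝ) ≤ K * wordDist SB x y) :
    ∀ b x y, (wordDist (boolFamilySet SA' SB' b) (boolFamilyEquiv f g b x)
      (boolFamilyEquiv f g b y) : ℝ) ≤ K * wordDist (boolFamilySet SA SB b) x y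
  | true, x, y => by
    obtain ⟨x, rfl⟩ := (liftTrue A B).surjective x
    obtain ⟨y, rfl⟩ := (liftTrue A B).surjective y
    simpa [boolFamilySet, wordDist_map_mulEquiv] using hfK x y
  | false, x, y => by
    obtain ⟨x, rfl⟩ := (liftFalse A B).surjective x
    obtain ⟨y, rfl⟩ := (liftFalse A B).surjective y
    simpa [boolFamilySet, wordDist_map_mulEquiv] using hgK x y

theorem boolFamilyEquiv_one {f : A ≃ A'} {g : B ≃ B'} (hf1 : f 1 = 1) (hg1 : g 1 = 1) :
    ∀ b, boolFamilyEquiv f g b 1 = 1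
  | true => by simpa [hf1] using boolFamilyEquiv_liftTrue (B := B) (B' := B') f g 1
  | false => by simpa [hg1] using boolFamilyEquiv_liftFalse (A := A) (A' := A') f g 1

variable {f g} (hf1 : f 1 = 1) (hg1 : g 1 = 1)

noncomputable def letterwise (u : Coprod A B) : Coprod A' B' :=
  (equivCoprodI A' B').symm
    (CoprodI.letterwise (boolFamilyEquiv f g) (boolFamilyEquiv_one hf1 hg1) (equivCoprodI A B u))

theorem letterwise_inl (a : A) : letterwise hf1 hg1 (inl a) = inl (f a) := by
  rw [letterwise, equivCoprodI_inl, CoprodI.letterwise_of, boolFamilyEquiv_liftTrue,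
    ← equivCoprodI_inl, MulEquiv.symm_apply_apply]

theorem letterwise_inr (b : B) : letterwise hf1 hg1 (inr b) = inr (g b) := by
  rw [letterwise, equivCoprodI_inr, CoprodI.letterwise_of, boolFamilyEquiv_liftFalse,
    ← equivCoprodI_inr, MulEquiv.symm_apply_apply]

theorem letterwise_symm_letterwise (hf1' : f.symm 1 = 1) (hg1' : g.symm 1 = 1) (u : Coprod A B) :
    letterwise hf1' hg1' (letterwise hf1 hg1 u) = u := by
  rw [letterwise, letterwise, MulEquiv.apply_symm_apply, CoprodI.letterwise_letterwise _ _ _ _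
    (leftInverse_boolFamilyEquiv_symm f g), MulEquiv.symm_apply_apply]

theorem wordDist_letterwise_le {SA : Set A} {SB : Set B} {SA' : Set A'} {SB' : Set B'}
    (hSA : Subgroup.closure SA = ⊤) (hSB : Subgroup.closure SB = ⊤)
    (hSA' : Subgroup.closure SA' = ⊤) (hSB' : Subgroup.closure SB' = ⊤) {K : ℝ} (hK : 0 ≤ K)
    (hfK : ∀ x y, (wordDist SA' (f x) (f y) : ℝ) ≤ K * wordDist SA x y)
    (hgK : ∀ x y, (wordDist SB' (g x) (g y) : ℝ) ≤ K * wordDist SB x y) (u v : Coprod A B) :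
    (wordDist (inl '' SA' ∪ inr '' SB') (letterwise hf1 hg1 u) (letterwise hf1 hg1 v) : ℝ) ≤
      K * wordDist (inl '' SA ∪ inr '' SB) u v := by
  rw [← wordDist_equivCoprodI, ← wordDist_equivCoprodI, letterwise, letterwise,
    MulEquiv.apply_symm_apply, MulEquiv.apply_symm_apply]
  exact CoprodI.wordDist_letterwise_le _ _ (closure_boolFamilySet hSA hSB)
    (closure_boolFamilySet hSA' hSB') hK (wordDist_boolFamilyEquiv_le f g hfK hgK) _ _

end Letterwise

end Monoid.Coprod

/-- If `θ : Γ₁ → Γ₂` is a bijective bilipschitz equivalence of finitely generated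
groups (word metrics) with `θ 1 = 1`, then for any finitely generated group `G`
the free products `Γ₁ * G` and `Γ₂ * G` are bilipschitz equivalent, via a map
agreeing with `θ` on `Γ₁`-syllables and with the identity on `G`-syllables. -/
theorem stmt19 {Γ₁ Γ₂ G : Type*} [Group Γ₁] [Group Γ₂] [Group G]
    (S₁ : Finset Γ₁) (S₂ : Finset Γ₂) (T : Finset G)
    (hS₁ : Subgroup.closure (S₁ : Set Γ₁) = ⊤)
    (hS₂ : Subgroup.closure (S₂ : Set Γ₂) = ⊤)
    (hT : Subgroup.closure (T : Set G) = ⊤)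
    (θ : Γ₁ → Γ₂) (hθ : Function.Bijective θ) (hθ1 : θ 1 = 1)
    (K : ℝ) (hK : 1 ≤ K)
    (hbl : ∀ x y : Γ₁,
      (wordDist (S₁ : Set Γ₁) x y : ℝ) ≤ K * (wordDist (S₂ : Set Γ₂) (θ x) (θ y) : ℝ) ∧
      (wordDist (S₂ : Set Γ₂) (θ x) (θ y) : ℝ) ≤ K * (wordDist (S₁ : Set Γ₁) x y : ℝ)) :
    ∃ (Θ : Monoid.Coprod Γ₁ G → Monoid.Coprod Γ₂ G) (L : ℝ), 1 ≤ L ∧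
      Function.Bijective Θ ∧
      (∀ γ : Γ₁, Θ (Monoid.Coprod.inl γ) = Monoid.Coprod.inl (θ γ)) ∧
      (∀ g : G, Θ (Monoid.Coprod.inr g) = Monoid.Coprod.inr g) ∧
      ∀ u v : Monoid.Coprod Γ₁ G,
        (wordDist (Monoid.Coprod.inl '' (S₁ : Set Γ₁) ∪
            Monoid.Coprod.inr '' (T : Set G)) u v : ℝ) ≤
          L * (wordDist (Monoid.Coprod.inl '' (S₂ : Set Γ₂) ∪
            Monoid.Coprod.inr '' (T : Set G)) (Θ u) (Θ v) : ℝ) ∧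
        (wordDist (Monoid.Coprod.inl '' (S₂ : Set Γ₂) ∪
            Monoid.Coprod.inr '' (T : Set G)) (Θ u) (Θ v) : ℝ) ≤
          L * (wordDist (Monoid.Coprod.inl '' (S₁ : Set Γ₁) ∪
            Monoid.Coprod.inr '' (T : Set G)) u v : ℝ) := by
  set ϑ := Equiv.ofBijective θ hθ
  have hϑ1 : ϑ.symm 1 = 1 := ϑ.symm_apply_eq.2 hθ1.symm
  have hϑK : ∀ x y, (wordDist (S₁ : Set Γ₁) (ϑ.symm x) (ϑ.symm y) : ℝ) ≤
      K * wordDist (S₂ : Set Γ₂) x y := fun x y => by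
    simpa [ϑ, Equiv.ofBijective_apply_symm_apply] using (hbl (ϑ.symm x) (ϑ.symm y)).1
  have hidK : ∀ x y, (wordDist (T : Set G) x y : ℝ) ≤ K * wordDist (T : Set G) x y :=
    fun x y => le_mul_of_one_le_left (Nat.cast_nonneg _) hK
  have hK0 : (0 : ℝ) ≤ K := zero_le_one.trans hK
  set Θ := Coprod.letterwise (f := ϑ) (g := Equiv.refl G) hθ1 rfl
  have hΘ_symm_Θ :=
    Coprod.letterwise_symm_letterwise (f := ϑ) (g := Equiv.refl G) hθ1 rfl hϑ1 rfl
  refine ⟨Θ, K, hK, ?_, Coprod.letterwise_inl hθ1 rfl, Coprod.letterwise_inr hθ1 rfl,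
    fun u v => ⟨?_, Coprod.wordDist_letterwise_le (f := ϑ) (g := Equiv.refl G) hθ1 rfl
      hS₁ hT hS₂ hT hK0 (fun x y => (hbl x y).2) hidK u v⟩⟩
  · exact Function.bijective_iff_has_inverse.2 ⟨_, hΘ_symm_Θ,
      Coprod.letterwise_symm_letterwise (f := ϑ.symm) (g := (Equiv.refl G).symm) hϑ1 rfl hθ1 rfl⟩
  · have h := Coprod.wordDist_letterwise_le (f := ϑ.symm) (g := (Equiv.refl G).symm) hϑ1 rfl
      hS₂ hT hS₁ hT hK0 hϑK hidK (Θ u) (Θ v)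
    rwa [hΘ_symm_Θ, hΘ_symm_Θ] at h
end
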